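/- Let q be a path ◇-query of the form ◇(ρ₁ ∧ ◇(ρ₂ ∧ … ∧ ◇ρₙ)) over finite signature σ with ρᵢ = {A₁ⁱ,…,A_{nᵢ}ⁱ}, and let k > 0. Define the data instance D_{q,k} = σ s₁ᵏ σ s₂ᵏ σ … s_{n−1}ᵏ σ sₙᵏ, where sᵢ is the word (σ∖{A₁ⁱ})(σ∖{A₂ⁱ})…(σ∖{A_{nᵢ}ⁱ}) and sᵏ denotes k-fold repetition. Then D_{q,k} ⊭ q at position 0, and for every path ◇-query q' over σ with q' not entailing q and temporal depth of q' at most k, D_{q,k} ⊨ q' at position 0. -/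
import Mathlib


inductive LTL (σ : Type) : Type where
  | atom : σ → LTL σ
  | top : LTL σ
  | bot : LTL σ
  | and : LTL σ → LTL σ → LTL σ
  | next : LTL σ → LTL σ
  | ev : LTL σ → LTL σ
  | evr : LTL σ → LTL σ
  | untl : LTL σ → LTL σ → LTL σ

/-- Satisfaction of an LTL query at position `ℓ` in a data instance `D`
(a finite word over `2^σ`, implicitly extended by `∅`). -/
def sat {σ : Type} (D : List (Finset σ)) : LTL σ → ℕ → Prop
  | .atom a, ℓ => a ∈ D.getD ℓ ∅
  | .top, _ => True
  | .bot, _ => False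
  | .and p q, ℓ => sat D p ℓ ∧ sat D q ℓ
  | .next p, ℓ => sat D p (ℓ + 1)
  | .ev p, ℓ => ∃ m, ℓ < m ∧ sat D p m
  | .evr p, ℓ => ∃ m, ℓ ≤ m ∧ sat D p m
  | .untl p q, ℓ => ∃ m, ℓ < m ∧ sat D q m ∧ ∀ k, ℓ < k → k < m → sat D p k

def equivQ {σ : Type} (p q : LTL σ) : Prop :=
  ∀ (D : List (Finset σ)) (ℓ : ℕ), sat D p ℓ ↔ sat D q ℓ

def entailsQ {σ : Type} (p q : LTL σ) : Prop :=
  ∀ (D : List (Finset σ)) (ℓ : ℕ), sat D p ℓ → sat D q ℓ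

/-- The conjunction of the atoms in `ρ`. -/
noncomputable def conjF {σ : Type} (ρ : Finset σ) : LTL σ :=
  ρ.toList.foldr (fun a r => (LTL.atom a).and r) LTL.top

/-- The class `Q[◇]`: queries built from atoms, `⊤`, `∧` and strict `◇` only. -/
inductive IsQDiam {σ : Type} : LTL σ → Prop
  | atom (a : σ) : IsQDiam (.atom a)
  | top : IsQDiam .top
  | and {p q : LTL σ} : IsQDiam p → IsQDiam q → IsQDiam (p.and q)
  | ev {p : LTL σ} : IsQDiam p → IsQDiam (.ev p)

/-- The path query `ρ₀ ∧ ◇(ρ₁ ∧ ◇(… ∧ ◇ρₙ))` of `Q_p[◇]`. -/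
noncomputable def pathD {σ : Type} (ρ : Finset σ) : List (Finset σ) → LTL σ
  | [] => conjF ρ
  | ρ' :: rest => (conjF ρ).and (LTL.ev (pathD ρ' rest))

/-- The path `◇`-query corresponding to a word `ρ₀ρ₁…ρₙ` over `2^σ`. -/
noncomputable def wq {σ : Type} : List (Finset σ) → LTL σ
  | [] => LTL.top
  | ρ :: rest => pathD ρ rest

/-- The word `sᵢ = (σ∖{A₁ⁱ})(σ∖{A₂ⁱ})…(σ∖{A_{nᵢ}ⁱ})` for `ρᵢ = {A₁ⁱ,…,A_{nᵢ}ⁱ}`. -/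
noncomputable def sOf (σ : Type) [Fintype σ] [DecidableEq σ] (ρ : Finset σ) :
    List (Finset σ) :=
  ρ.toList.map fun a => (Finset.univ : Finset σ) \ {a}

/-- The data instance `D_{q,k} = σ s₁ᵏ σ s₂ᵏ σ … s_{n−1}ᵏ σ sₙᵏ`. -/
noncomputable def Dqk (σ : Type) [Fintype σ] [DecidableEq σ]
    (ρs : List (Finset σ)) (k : ℕ) : List (Finset σ) :=
  (ρs.map fun ρ =>
    (Finset.univ : Finset σ) :: (List.replicate k (sOf σ ρ)).flatten).flatten


/-! ### Auxiliary development -/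

section Aux

variable {σ : Type}

/-- Simple semantics of path queries as words. -/
def SatL (D : List (Finset σ)) : List (Finset σ) → ℕ → Prop
  | [], _ => True
  | ρ :: rest, ℓ => ρ ⊆ D.getD ℓ ∅ ∧ ∃ m, ℓ < m ∧ SatL D rest m

lemma sat_conjF (D : List (Finset σ)) (ρ : Finset σ) (ℓ : ℕ) :
    sat D (conjF ρ) ℓ ↔ ρ ⊆ D.getD ℓ ∅ := by
  have key : ∀ l : List σ,
      sat D (l.foldr (fun a r => (LTL.atom a).and r) LTL.top) ℓ ↔
        ∀ a ∈ l, a ∈ D.getD ℓ ∅ := by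
    intro l
    induction l with
    | nil => simp [sat]
    | cons a l ih => simp [sat, ih]
  rw [conjF, key]
  constructor
  · intro h a ha
    exact h a (by simpa [Finset.mem_toList] using ha)
  · intro h a ha
    exact h (by simpa [Finset.mem_toList] using ha)

lemma sat_wq_cons (D : List (Finset σ)) (ρ : Finset σ) (rest : List (Finset σ)) (ℓ : ℕ) :
    sat D (wq (ρ :: rest)) ℓ ↔ SatL D (ρ :: rest) ℓ := by
  induction rest generalizing ρ ℓ with
  | nil =>
    simp only [wq, pathD, SatL, sat_conjF]
    constructor
    · exact fun h => ⟨h, ℓ + 1, Nat.lt_succ_self ℓ, trivial⟩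
    · exact fun h => h.1
  | cons ρ' rest ih =>
    show sat D ((conjF ρ).and (LTL.ev (pathD ρ' rest))) ℓ ↔ _
    simp only [sat, SatL, sat_conjF]
    constructor
    · rintro ⟨h1, m, hm, h2⟩
      exact ⟨h1, m, hm, (ih ρ' m).1 h2⟩
    · rintro ⟨h1, m, hm, h2⟩
      exact ⟨h1, m, hm, (ih ρ' m).2 h2⟩

lemma getD_append_left' (l₁ l₂ : List (Finset σ)) (n : ℕ) (h : n < l₁.length) :
    (l₁ ++ l₂).getD n ∅ = l₁.getD n ∅ := by
  rw [List.getD_append _ _ _ _ h]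

lemma getD_append_right' (l₁ l₂ : List (Finset σ)) (m : ℕ) :
    (l₁ ++ l₂).getD (l₁.length + m) ∅ = l₂.getD m ∅ := by
  simp [List.getD, List.getElem?_append_right]

lemma SatL_shift (l₁ l₂ : List (Finset σ)) (w : List (Finset σ)) (m : ℕ) :
    SatL (l₁ ++ l₂) w (l₁.length + m) ↔ SatL l₂ w m := by
  induction w generalizing m with
  | nil => simp [SatL]
  | cons ρ w ih =>
    simp only [SatL, getD_append_right']
    constructor
    · rintro ⟨h1, m', hm', h2⟩
      have hle : l₁.length ≤ m' := le_trans (Nat.le_add_right _ _) (le_of_lt hm')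
      refine ⟨h1, m' - l₁.length, by omega, ?_⟩
      have := (ih (m' - l₁.length)).1
      rw [Nat.add_sub_cancel' hle] at this
      exact this h2
    · rintro ⟨h1, m', hm', h2⟩
      exact ⟨h1, l₁.length + m', by omega, (ih m').2 h2⟩

lemma Embeds_nil' : ∀ (ts : List (Finset σ)), True := fun _ => trivial

/-- Embedding of `ρs` into `ts` (order-preserving, pointwise `⊆`). -/
def Embeds : List (Finset σ) → List (Finset σ) → Prop
  | [], _ => True
  | _ :: _, [] => False
  | ρ :: rs, t :: ts => (ρ ⊆ t ∧ Embeds rs ts) ∨ Embeds (ρ :: rs) ts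

lemma Embeds.satL {D : List (Finset σ)} :
    ∀ {ρs ts : List (Finset σ)} {m : ℕ}, Embeds ρs ts → SatL D ts m →
      ∃ m', m ≤ m' ∧ SatL D ρs m' := by
  intro ρs ts
  induction ts generalizing ρs with
  | nil =>
    intro m he _
    match ρs, he with
    | [], _ => exact ⟨m, le_rfl, trivial⟩
  | cons t ts ih =>
    intro m he hs
    match ρs, he with
    | [], _ => exact ⟨m, le_rfl, trivial⟩
    | ρ :: rs, he =>
      obtain ⟨ht, m₂, hm₂, hts⟩ := hs
      rcases he with ⟨hsub, he⟩ | he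
      · obtain ⟨m', hm', hrs⟩ := ih he hts
        exact ⟨m, le_rfl, hsub.trans ht, m', lt_of_lt_of_le hm₂ hm', hrs⟩
      · obtain ⟨m', hm', hrs⟩ := ih he hts
        exact ⟨m', le_of_lt (lt_of_lt_of_le hm₂ hm'), hrs⟩

variable [Fintype σ] [DecidableEq σ]

lemma Dqk_cons (ρ : Finset σ) (rest : List (Finset σ)) (k : ℕ) :
    Dqk σ (ρ :: rest) k =
      ((Finset.univ : Finset σ) :: (List.replicate k (sOf σ ρ)).flatten) ++ Dqk σ rest k := by
  simp [Dqk]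

lemma length_sOf (ρ : Finset σ) : (sOf σ ρ).length = ρ.card := by
  simp [sOf]

lemma length_flat (ρ : Finset σ) (k : ℕ) :
    ((List.replicate k (sOf σ ρ)).flatten).length = k * ρ.card := by
  simp [List.length_flatten, length_sOf, Finset.card_univ]

lemma mem_flat {ρ : Finset σ} {k : ℕ} {x : Finset σ}
    (hx : x ∈ (List.replicate k (sOf σ ρ)).flatten) :
    ∃ a ∈ ρ, x = (Finset.univ : Finset σ) \ {a} := by
  rw [List.mem_flatten] at hx
  obtain ⟨l, hl, hxl⟩ := hx
  rw [List.eq_of_mem_replicate hl] at hxl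
  rw [sOf, List.mem_map] at hxl
  obtain ⟨a, ha, rfl⟩ := hxl
  exact ⟨a, by simpa [Finset.mem_toList] using ha, rfl⟩

lemma getD_flatten_replicate (s : List (Finset σ)) :
    ∀ (k c : ℕ), c < k → ∀ i < s.length,
      ((List.replicate k s).flatten).getD (c * s.length + i) ∅ = s.getD i ∅ := by
  intro k
  induction k with
  | zero => omega
  | succ k ih =>
    intro c hc i hi
    rw [List.replicate_succ, List.flatten_cons]
    rcases Nat.eq_zero_or_pos c with rfl | hcpos
    · rw [zero_mul, zero_add, getD_append_left' _ _ _ hi]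
    · have h : c * s.length + i = s.length + ((c - 1) * s.length + i) := by
        have : c * s.length = s.length + (c - 1) * s.length := by
          rcases c with _ | d
          · omega
          · rw [Nat.succ_sub_one, Nat.succ_mul]; omega
        omega
      rw [h, getD_append_right', ih (c - 1) (by omega) i hi]

/-- No satisfying position for `ρs` in `Dqk σ ρs k` other than `0`. -/
lemma lemA (k : ℕ) :
    ∀ (ρs : List (Finset σ)), (∀ ρ ∈ ρs, ρ.Nonempty) →
      ∀ p, SatL (Dqk σ ρs k) ρs p → ρs = [] ∨ p = 0 := by
  intro ρs
  induction ρs with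
  | nil => intro _ p _; exact Or.inl rfl
  | cons ρ rs ih =>
    intro hρ p hsat
    right
    by_contra hp0
    obtain ⟨hsub, m, hm, hrest⟩ := hsat
    rw [Dqk_cons] at hsub hrest
    set flat := (List.replicate k (sOf σ ρ)).flatten with hflat
    have hL : ((Finset.univ : Finset σ) :: flat).length = 1 + k * ρ.card := by
      rw [List.length_cons, hflat, length_flat]; omega
    by_cases hpL : p < 1 + k * ρ.card
    · -- interior position: letter is univ \ {a} with a ∈ ρ
      have hp1 : 1 ≤ p := by omega
      have hplen : p < ((Finset.univ : Finset σ) :: flat).length := by omega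
      rw [getD_append_left' _ _ _ hplen] at hsub
      have hpflat : p - 1 < flat.length := by
        rw [hflat, length_flat]; omega
      have : ((Finset.univ : Finset σ) :: flat).getD p ∅ = flat.getD (p - 1) ∅ := by
        rcases Nat.exists_eq_add_of_le hp1 with ⟨j, rfl⟩
        rw [Nat.add_comm]
        simp [List.getD_cons_succ]
      rw [this, List.getD_eq_getElem _ _ hpflat] at hsub
      obtain ⟨a, ha, hx⟩ := mem_flat (List.getElem_mem hpflat)
      rw [hx] at hsub
      have := hsub ha
      simp at this
    · -- p ≥ block length
      rcases rs with _ | ⟨ρ', rs'⟩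
      · -- single block, position beyond the word
        have : Dqk σ ([] : List (Finset σ)) k = [] := by simp [Dqk]
        rw [this, List.append_nil] at hsub
        have : ((Finset.univ : Finset σ) :: flat).getD p ∅ = ∅ :=
          List.getD_eq_default _ _ (by omega)
        rw [this] at hsub
        obtain ⟨a, ha⟩ := hρ ρ (by simp)
        exact absurd (hsub ha) (by simp)
      · -- shift into the remaining blocks
        have hmL : 1 + k * ρ.card ≤ m := by omega
        have hshift : SatL (Dqk σ (ρ' :: rs') k) (ρ' :: rs') (m - (1 + k * ρ.card)) := by
          have := (SatL_shift ((Finset.univ : Finset σ) :: flat) (Dqk σ (ρ' :: rs') k)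
            (ρ' :: rs') (m - (1 + k * ρ.card))).1
          apply this
          have hrw : ((Finset.univ : Finset σ) :: flat).length + (m - (1 + k * ρ.card)) = m := by
            omega
          rw [hrw]
          exact hrest
        have := ih (fun τ hτ => hρ τ (by simp [hτ])) _ hshift
        rcases this with h | h
        · exact absurd h (by simp)
        · omega

/-- Construction: if `ρs` does not embed into `ts`, then `ts` can be satisfied
starting strictly after copy `c` of the first block. -/
lemma lemC (k : ℕ) :
    ∀ (ts : List (Finset σ)) (ρ : Finset σ) (rs : List (Finset σ)) (c : ℕ),
      ¬ Embeds (ρ :: rs) ts → c + ts.length ≤ k →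
      ∃ m, c * ρ.card < m ∧ SatL (Dqk σ (ρ :: rs) k) ts m := by
  intro ts
  induction ts with
  | nil =>
    intro ρ rs c _ _
    exact ⟨c * ρ.card + 1, Nat.lt_succ_self _, trivial⟩
  | cons t ts ih =>
    intro ρ rs c hemb hlen
    have hemb' : ¬ (ρ ⊆ t ∧ Embeds rs ts) ∧ ¬ Embeds (ρ :: rs) ts := by
      constructor <;> intro h <;> exact hemb (by first | exact Or.inl h | exact Or.inr h)
    by_cases hsub : ρ ⊆ t
    · -- Case B: advance to the next block
      have hrs : ¬ Embeds rs ts := fun h => hemb'.1 ⟨hsub, h⟩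
      rcases rs with _ | ⟨ρ', rs'⟩
      · exact absurd (by cases ts <;> trivial) hrs
      · obtain ⟨m', hm', hsat'⟩ := ih ρ' rs' 0 hrs
          (by simp only [List.length_cons] at hlen; omega)
        set L := 1 + k * ρ.card with hLdef
        set blk := ((Finset.univ : Finset σ) :: (List.replicate k (sOf σ ρ)).flatten)
          with hblk
        have hblklen : blk.length = L := by
          rw [hblk, List.length_cons, length_flat, hLdef]; omega
        refine ⟨L, ?_, ?_⟩
        · have : c < k := by simp at hlen; omega
          calc c * ρ.card ≤ k * ρ.card := Nat.mul_le_mul_right _ (le_of_lt this)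
            _ < L := by omega
        · rw [Dqk_cons]
          refine ⟨?_, blk.length + m', by omega, ?_⟩
          · have : (blk ++ Dqk σ (ρ' :: rs') k).getD L ∅ = (Dqk σ (ρ' :: rs') k).getD 0 ∅ := by
              conv_lhs => rw [show L = blk.length + 0 by omega]
              exact getD_append_right' _ _ 0
            rw [this, Dqk_cons]
            simp
          · exact (SatL_shift blk _ ts m').2 hsat'
    · -- Case A: stay in the first block
      obtain ⟨a, haρ, hat⟩ := Finset.not_subset.1 hsub
      obtain ⟨i, hi, hia⟩ := List.mem_iff_getElem.1 (Finset.mem_toList.2 haρ)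
      rw [Finset.length_toList] at hi
      have hcard : 0 < ρ.card := by omega
      have hck : c + 1 ≤ k := by simp at hlen; omega
      obtain ⟨m', hm', hsat'⟩ := ih ρ rs (c + 1) hemb'.2 (by simp at hlen ⊢; omega)
      set m := 1 + (c * ρ.card + i) with hmdef
      refine ⟨m, by omega, ?_⟩
      have hgm : (Dqk σ (ρ :: rs) k).getD m ∅ = (Finset.univ : Finset σ) \ {a} := by
        rw [Dqk_cons]
        set flat := (List.replicate k (sOf σ ρ)).flatten with hflat
        have hj : c * ρ.card + i < flat.length := by
          rw [hflat, length_flat]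
          calc c * ρ.card + i < c * ρ.card + ρ.card := by omega
            _ = (c + 1) * ρ.card := by ring
            _ ≤ k * ρ.card := Nat.mul_le_mul_right _ hck
        have hmlen : m < ((Finset.univ : Finset σ) :: flat).length := by
          simp only [List.length_cons]; omega
        rw [getD_append_left' _ _ _ hmlen]
        have hstep : ((Finset.univ : Finset σ) :: flat).getD m ∅ =
            flat.getD (c * ρ.card + i) ∅ := by
          rw [hmdef, Nat.add_comm, List.getD_cons_succ]
        rw [hstep, hflat]
        have := getD_flatten_replicate (sOf σ ρ) k c (by omega) i (by rw [length_sOf]; omega)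
        rw [length_sOf] at this
        rw [this]
        rw [List.getD_eq_getElem _ _ (by rw [length_sOf]; omega)]
        simp only [sOf]
        rw [List.getElem_map]
        rw [hia]
      refine ⟨?_, m', ?_, hsat'⟩
      · rw [hgm]
        intro x hx
        simp only [Finset.mem_sdiff, Finset.mem_univ, Finset.mem_singleton, true_and]
        rintro rfl
        exact hat hx
      · calc m ≤ (c + 1) * ρ.card := by rw [hmdef]; ring_nf; omega
          _ < m' := hm'

end Aux

/-- For `q = ◇(ρ₁ ∧ ◇(ρ₂ ∧ … ∧ ◇ρₙ))` (with nonempty `ρᵢ`) and `k > 0`: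
`D_{q,k} ⊭ q` at `0`, and every path `◇`-query `q'` over `σ` with `q' ⊭ q` and
temporal depth at most `k` satisfies `D_{q,k} ⊨ q'` at `0`. -/
theorem Dqk_separates (σ : Type) [Fintype σ] [DecidableEq σ] [Nonempty σ]
    (ρs : List (Finset σ)) (hne : ρs ≠ []) (hρ : ∀ ρ ∈ ρs, ρ.Nonempty)
    (k : ℕ) (hk : 0 < k) :
    ¬ sat (Dqk σ ρs k) (LTL.ev (wq ρs)) 0 ∧
    (∀ w : List (Finset σ), w ≠ [] →
      ¬ entailsQ (wq w) (LTL.ev (wq ρs)) → w.length ≤ k + 1 →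
      sat (Dqk σ ρs k) (wq w) 0) := by
  obtain ⟨ρ, rest, rfl⟩ := List.exists_cons_of_ne_nil hne
  constructor
  · rintro ⟨m, hm, hsat⟩
    rw [sat_wq_cons] at hsat
    rcases lemA k (ρ :: rest) hρ m hsat with h | h
    · exact absurd h (by simp)
    · omega
  · intro w hw hent hlen
    obtain ⟨τ₀, ts, rfl⟩ := List.exists_cons_of_ne_nil hw
    have hne' : ¬ Embeds (ρ :: rest) ts := by
      intro hemb
      apply hent
      intro D' ℓ hsat'
      rw [sat_wq_cons] at hsat'
      obtain ⟨_, m, hm, hts⟩ := hsat'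
      obtain ⟨m', hm', hρs⟩ := hemb.satL hts
      exact ⟨m', lt_of_lt_of_le hm hm', (sat_wq_cons D' ρ rest m').2 hρs⟩
    obtain ⟨m, hm, hsat⟩ := lemC k ts ρ rest 0 hne'
      (by simp only [List.length_cons] at hlen; omega)
    rw [sat_wq_cons]
    refine ⟨?_, m, by omega, hsat⟩
    have : (Dqk σ (ρ :: rest) k).getD 0 ∅ = (Finset.univ : Finset σ) := by
      rw [Dqk_cons]; rfl
    rw [this]
    exact fun x _ => Finset.mem_univ x
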